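/- Let μ be a probability measure on ℝⁿ. Then the chi-squared divergence of the convolution N(0,I_n) ∗ μ from N(0,I_n) satisfies χ²(N(0,I_n)∗μ ‖ N(0,I_n)) ≤ E[e^{⟨x,x'⟩}] − 1, where x, x' are independent samples from μ. -/

import Mathlib

open MeasureTheory ProbabilityTheory

/-- The standard Gaussian measure `N(0, I_n)` on `Fin n → ℝ`. -/
noncomputable def stdGaussian (n : ℕ) : Measure (Fin n → ℝ) :=
  Measure.pi fun _ => gaussianReal 0 1

/-- The convolution of two measures on `Fin n → ℝ`. -/
noncomputable def conv {n : ℕ} (μ ν : Measure (Fin n → ℝ)) : Measure (Fin n → ℝ) :=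
  Measure.map (fun p => p.1 + p.2) (μ.prod ν)

/-! The translate of `γ = N(0, I_n)` by `y` has density `e^{⟨x,y⟩ - |y|²/2}` with respect to `γ`
(Cameron–Martin), so `γ ∗ μ` has density `F x = ∫ e^{⟨x,y⟩ - |y|²/2} dμ(y)`. Writing `F²` as a
double integral over `μ ⊗ μ` and using Tonelli, the inner Gaussian integral of
`e^{⟨x,y⟩ - |y|²/2} e^{⟨x,y'⟩ - |y'|²/2}` is `e^{⟨y,y'⟩}` times the total mass of the translate by
`y + y'`, which is `1`. So `∫ F² dγ = E[e^{⟨x,x'⟩}]` in `ℝ≥0∞`, and the claim holds with equality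
(when this is `∞`, both real-valued sides are the junk value `-1`). -/

open Real
open scoped ENNReal

theorem lintegral_fintype_prod_eq_prod {ι : Type*} [Fintype ι] {X : ι → Type*}
    [∀ i, MeasurableSpace (X i)] (μ : (i : ι) → Measure (X i)) [∀ i, IsProbabilityMeasure (μ i)]
    {g : (i : ι) → X i → ℝ≥0∞} (hg : ∀ i, Measurable (g i)) :
    ∫⁻ x, ∏ i, g i (x i) ∂Measure.pi μ = ∏ i, ∫⁻ t, g i t ∂μ i := by
  rw [lintegral_prod_eq_prod_lintegral_of_indepFun _ _
    (iIndepFun_pi fun i => (hg i).aemeasurable) fun i => (hg i).comp (measurable_pi_apply i)]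
  exact Finset.prod_congr rfl fun i _ => (measurePreserving_eval μ i).lintegral_comp (hg i)

theorem MeasureTheory.Measure.pi_withDensity {ι : Type*} [Fintype ι] {X : ι → Type*}
    [∀ i, MeasurableSpace (X i)] (μ : (i : ι) → Measure (X i)) [∀ i, IsProbabilityMeasure (μ i)]
    {g : (i : ι) → X i → ℝ≥0∞} (hg : ∀ i, Measurable (g i))
    [∀ i, SigmaFinite ((μ i).withDensity (g i))] :
    Measure.pi (fun i => (μ i).withDensity (g i))
      = (Measure.pi μ).withDensity (fun x => ∏ i, g i (x i)) := by
  refine Measure.pi_eq (μ := fun i => (μ i).withDensity (g i)) fun s hs => ?_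
  have hind : (Set.univ.pi s).indicator (fun x => ∏ i, g i (x i))
      = fun x => ∏ i, (s i).indicator (g i) (x i) := by
    ext x
    by_cases hx : x ∈ Set.univ.pi s
    · rw [Set.indicator_of_mem hx]
      exact Finset.prod_congr rfl fun i _ => (Set.indicator_of_mem (hx i trivial) _).symm
    · rw [Set.indicator_of_notMem hx]
      obtain ⟨i, hi⟩ := not_forall.1 (Set.mem_univ_pi.not.1 hx)
      exact (Finset.prod_eq_zero (Finset.mem_univ i) (Set.indicator_of_notMem hi _)).symm
  rw [withDensity_apply _ (MeasurableSet.univ_pi hs),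
    ← lintegral_indicator (MeasurableSet.univ_pi hs), hind,
    lintegral_fintype_prod_eq_prod μ fun i => (hg i).indicator (hs i)]
  exact Finset.prod_congr rfl fun i _ => by
    rw [lintegral_indicator (hs i), withDensity_apply _ (hs i)]

theorem MeasureTheory.Measure.conv_eq_withDensity_of_map_add {M : Type*} [AddMonoid M]
    [MeasurableSpace M] [MeasurableAdd₂ M] {ν μ : Measure M} [SFinite ν] [SFinite μ]
    {f : M → M → ℝ≥0∞} (hf : Measurable (Function.uncurry f))
    (hmap : ∀ y, ν.map (· + y) = ν.withDensity (f y)) :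
    ν ∗ μ = ν.withDensity fun x => ∫⁻ y, f y x ∂μ := by
  refine Measure.ext_of_lintegral _ fun g hg => ?_
  calc ∫⁻ z, g z ∂(ν ∗ μ)
      = ∫⁻ y, ∫⁻ x, g (x + y) ∂ν ∂μ := by
        rw [Measure.lintegral_conv hg, lintegral_lintegral_swap (by fun_prop)]
    _ = ∫⁻ y, ∫⁻ x, f y x * g x ∂ν ∂μ := by
        refine lintegral_congr fun y => ?_
        rw [← lintegral_map hg (measurable_add_const y), hmap,
          lintegral_withDensity_eq_lintegral_mul _ hf.of_uncurry_left hg]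
        rfl
    _ = ∫⁻ x, (∫⁻ y, f y x ∂μ) * g x ∂ν := by
        rw [lintegral_lintegral_swap (by fun_prop)]
        exact lintegral_congr fun x => lintegral_mul_const _ hf.of_uncurry_right
    _ = ∫⁻ x, g x ∂ν.withDensity fun x => ∫⁻ y, f y x ∂μ :=
        (lintegral_withDensity_eq_lintegral_mul _ hf.lintegral_prod_left' hg).symm

theorem lintegral_sq_lintegral_eq_lintegral_prod {α β : Type*} [MeasurableSpace α]
    [MeasurableSpace β] {ν : Measure α} {μ : Measure β} [SFinite ν] [SFinite μ] {f : β → α → ℝ≥0∞}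
    (hf : Measurable (Function.uncurry f)) :
    ∫⁻ x, (∫⁻ y, f y x ∂μ) ^ 2 ∂ν = ∫⁻ p : β × β, ∫⁻ x, f p.1 x * f p.2 x ∂ν ∂μ.prod μ := by
  simp_rw [pow_two, ← lintegral_prod_mul hf.of_uncurry_right.aemeasurable
    hf.of_uncurry_right.aemeasurable]
  exact lintegral_lintegral_swap (by fun_prop)

theorem integral_toReal_rnDeriv_sq {α : Type*} [MeasurableSpace α] (P ν : Measure α)
    [SigmaFinite P] :
    ∫ x, (P.rnDeriv ν x).toReal ^ 2 ∂ν = (∫⁻ x, P.rnDeriv ν x ^ 2 ∂ν).toReal := by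
  simp_rw [← ENNReal.toReal_pow]
  refine integral_toReal (by fun_prop) ?_
  filter_upwards [P.rnDeriv_lt_top ν] with x hx
  exact ENNReal.pow_lt_top hx

theorem gaussianReal_eq_withDensity_exp (y : ℝ) :
    gaussianReal y 1 = (gaussianReal 0 1).withDensity
      (fun t => ENNReal.ofReal (exp (t * y - y ^ 2 / 2))) := by
  rw [gaussianReal_of_var_ne_zero _ one_ne_zero, gaussianReal_of_var_ne_zero _ one_ne_zero,
    ← withDensity_mul _ (measurable_gaussianPDF 0 1) (by fun_prop)]
  congr 1
  ext t
  rw [Pi.mul_apply, gaussianPDF, gaussianPDF, ← ENNReal.ofReal_mul (gaussianPDFReal_nonneg 0 1 t)]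
  simp only [gaussianPDFReal, NNReal.coe_one, mul_one, sub_zero, mul_assoc, ← exp_add]
  ring_nf

instance isProbabilityMeasure_stdGaussian {n : ℕ} : IsProbabilityMeasure (stdGaussian n) := by
  unfold _root_.stdGaussian; infer_instance

noncomputable def cameronMartinDensity {n : ℕ} (y x : Fin n → ℝ) : ℝ≥0∞ :=
  ENNReal.ofReal (exp (∑ i, (x i * y i - y i ^ 2 / 2)))

@[fun_prop]
theorem measurable_cameronMartinDensity {n : ℕ} :
    Measurable (fun p : (Fin n → ℝ) × (Fin n → ℝ) => cameronMartinDensity p.1 p.2) := by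
  unfold cameronMartinDensity; fun_prop

theorem stdGaussian_map_add_const {n : ℕ} (y : Fin n → ℝ) :
    (stdGaussian n).map (· + y) = (stdGaussian n).withDensity (cameronMartinDensity y) := by
  have hdensity : cameronMartinDensity y
      = fun x => ∏ i, ENNReal.ofReal (exp (x i * y i - y i ^ 2 / 2)) := by
    ext x
    rw [cameronMartinDensity, exp_sum, ENNReal.ofReal_prod_of_nonneg fun i _ => exp_nonneg _]
  calc (stdGaussian n).map (· + y)
      = Measure.pi fun i => (gaussianReal 0 1).map (· + y i) :=
        Measure.pi_map_pi fun i => (measurable_add_const (y i)).aemeasurable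
    _ = Measure.pi fun i =>
          (gaussianReal 0 1).withDensity fun t => ENNReal.ofReal (exp (t * y i - y i ^ 2 / 2)) := by
        congr 1 with i : 1
        rw [gaussianReal_map_add_const, zero_add, gaussianReal_eq_withDensity_exp]
    _ = (stdGaussian n).withDensity (cameronMartinDensity y) := by
        rw [Measure.pi_withDensity _ fun i => by fun_prop, hdensity, _root_.stdGaussian]

theorem lintegral_cameronMartinDensity {n : ℕ} (y : Fin n → ℝ) :
    ∫⁻ x, cameronMartinDensity y x ∂stdGaussian n = 1 := by
  rw [← setLIntegral_univ, ← withDensity_apply _ MeasurableSet.univ, ← stdGaussian_map_add_const,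
    Measure.map_apply (measurable_add_const y) MeasurableSet.univ, Set.preimage_univ,
    measure_univ]

theorem cameronMartinDensity_mul {n : ℕ} (y y' x : Fin n → ℝ) :
    cameronMartinDensity y x * cameronMartinDensity y' x
      = cameronMartinDensity (y + y') x * ENNReal.ofReal (exp (∑ i, y i * y' i)) := by
  simp only [cameronMartinDensity, ← ENNReal.ofReal_mul (exp_nonneg _), ← exp_add,
    ← Finset.sum_add_distrib, Pi.add_apply]
  congr 3 with i
  ring

theorem lintegral_cameronMartinDensity_mul {n : ℕ} (y y' : Fin n → ℝ) :
    ∫⁻ x, cameronMartinDensity y x * cameronMartinDensity y' x ∂stdGaussian n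
      = ENNReal.ofReal (exp (∑ i, y i * y' i)) := by
  simp_rw [cameronMartinDensity_mul]
  rw [lintegral_mul_const _ (by fun_prop), lintegral_cameronMartinDensity, one_mul]

/-- For a probability measure `μ` on `ℝⁿ`, the chi-squared divergence of `N(0,I_n) ∗ μ`
from `N(0,I_n)`, namely `∫ (d(N∗μ)/dN)² dN − 1`, is at most `E[e^{⟨x,x'⟩}] − 1` for
independent `x, x' ~ μ`. -/
theorem chiSq_conv_gaussian_le {n : ℕ} (μ : Measure (Fin n → ℝ)) [IsProbabilityMeasure μ] :
    (∫ x, (((conv (stdGaussian n) μ).rnDeriv (stdGaussian n) x).toReal) ^ 2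
        ∂(stdGaussian n)) - 1
      ≤ (∫ p : (Fin n → ℝ) × (Fin n → ℝ), Real.exp (∑ i, p.1 i * p.2 i) ∂(μ.prod μ)) - 1 := by
  have : IsProbabilityMeasure (conv (stdGaussian n) μ) :=
    inferInstanceAs (IsProbabilityMeasure (stdGaussian n ∗ μ))
  have hconv : conv (stdGaussian n) μ
      = (stdGaussian n).withDensity fun x => ∫⁻ y, cameronMartinDensity y x ∂μ :=
    Measure.conv_eq_withDensity_of_map_add measurable_cameronMartinDensity
      stdGaussian_map_add_const
  have hrnDeriv : (conv (stdGaussian n) μ).rnDeriv (stdGaussian n)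
      =ᵐ[stdGaussian n] fun x => ∫⁻ y, cameronMartinDensity y x ∂μ := by
    rw [hconv]
    exact Measure.rnDeriv_withDensity _ measurable_cameronMartinDensity.lintegral_prod_left'
  rw [integral_toReal_rnDeriv_sq, lintegral_congr_ae (hrnDeriv.mono fun x hx => by rw [hx]),
    lintegral_sq_lintegral_eq_lintegral_prod measurable_cameronMartinDensity,
    integral_eq_lintegral_of_nonneg_ae (ae_of_all _ fun _ => exp_nonneg _) (by fun_prop)]
  simp_rw [lintegral_cameronMartinDensity_mul]
  exact le_rfl
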